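/- arXiv:0904.3548 — 2 statements merged into one kernel-verified Lean document; each statement's English description precedes it below -/
import Mathlib

section
/- If #(E_i ∩ A_i) = i for some 0 ≤ i ≤ n, then E_i = E_i^⊥ (that is, F_i is a maximal totally isotropic subspace of k^{2n}). -/
open Finset

namespace OrthLM

/-- The star operation `E* = {i* : i ∈ E}` with `i* = 2n+1-i` (0-indexed: `Fin.rev`). -/
def fstar {N : ℕ} (E : Finset (Fin N)) : Finset (Fin N) := E.image Fin.rev

/-- The perp operation `E^⊥ = (Eᶜ)* = (E*)ᶜ`. -/
def fperp {N : ℕ} (E : Finset (Fin N)) : Finset (Fin N) := fstar Eᶜ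

/-- The set `A_i = {1,…,i} ∪ {i*,…,2n}` (0-indexed: `{j : j < i or 2n - i ≤ j}`). -/
def Aset (n : ℕ) (i : ℕ) : Finset (Fin (2*n)) :=
  univ.filter fun j => (j:ℕ) < i ∨ 2*n - i ≤ (j:ℕ)


lemma mem_fstar {N : ℕ} {E : Finset (Fin N)} {x : Fin N} : x ∈ fstar E ↔ x.rev ∈ E := by
  constructor
  · rintro h
    obtain ⟨a, ha, rfl⟩ := Finset.mem_image.1 h
    simpa [Fin.rev_rev] using ha
  · intro h
    exact Finset.mem_image.2 ⟨x.rev, h, Fin.rev_rev x⟩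

lemma mem_fperp {N : ℕ} {E : Finset (Fin N)} {x : Fin N} : x ∈ fperp E ↔ x.rev ∉ E := by
  simp [fperp, mem_fstar]

lemma card_fstar {N : ℕ} (E : Finset (Fin N)) : (fstar E).card = E.card :=
  Finset.card_image_of_injective _ Fin.rev_injective

lemma card_fperp {N : ℕ} (E : Finset (Fin N)) : (fperp E).card = N - E.card := by
  rw [fperp, card_fstar, Finset.card_compl, Fintype.card_fin]

lemma chain_mono {n : ℕ} (E : ℕ → Finset (Fin (2*n)))
    (hchain : ∀ i : Fin (2*n), E (i:ℕ) \ {i} ⊆ E ((i:ℕ) + 1))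
    (C : Finset (Fin (2*n))) (a b : ℕ) (hab : a ≤ b) (hb : b ≤ 2*n)
    (hC : ∀ k : Fin (2*n), a ≤ (k:ℕ) → (k:ℕ) < b → k ∉ C)
    {x : Fin (2*n)} (hx : x ∈ E a) (hxC : x ∈ C) : x ∈ E b := by
  induction b, hab using Nat.le_induction with
  | base => exact hx
  | succ b hab ih =>
    have hb' : b < 2*n := hb
    have hmem : x ∈ E b := ih (Nat.le_of_succ_le hb)
      (fun k h1 h2 => hC k h1 (Nat.lt_succ_of_lt h2))
    have h2 := hchain ⟨b, hb'⟩
    simp only [Fin.val_mk] at h2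
    apply h2
    simp only [Finset.mem_sdiff, Finset.mem_singleton]
    refine ⟨hmem, fun h => ?_⟩
    exact hC ⟨b, hb'⟩ (by simpa using hab) (by simp) (h ▸ hxC)

/-- For a T-fixed point of the naive local model, encoded by subsets
`E_0, …, E_{2n}` as in the context, if `#(E_i ∩ A_i) = i` for some `0 ≤ i ≤ n`, then
`E_i = E_i^⊥` (i.e. `F_i` is a maximal totally isotropic subspace of `k^{2n}`). -/
theorem card_inter_eq_imp_lagrangian (n : ℕ) (hn : 2 ≤ n) (E : ℕ → Finset (Fin (2*n)))
    (hcard : ∀ i ≤ 2*n, (E i).card = n)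
    (hchain : ∀ i : Fin (2*n), E (i:ℕ) \ {i} ⊆ E ((i:ℕ) + 1))
    (hper : E (2*n) = E 0)
    (hdual : ∀ i ≤ 2*n, E (2*n - i) = fperp (E i)) :
    ∀ i ≤ n, (E i ∩ Aset n i).card = i → E i = fperp (E i) := by
  intro i hi hEA
  set A : Finset (Fin (2*n)) := Aset n i with hA
  have hi2 : i ≤ 2*n := by omega
  have hmemA : ∀ j : Fin (2*n), j ∈ A ↔ ((j:ℕ) < i ∨ 2*n - i ≤ (j:ℕ)) := by
    intro j; simp [hA, Aset]
  have hrev : ∀ j : Fin (2*n), (j.rev : ℕ) = 2*n - 1 - (j:ℕ) := by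
    intro j
    have := Fin.val_rev j
    omega
  -- Step A: elements of `E i ∩ A` land in `fperp (E i)`
  have stepA : ∀ x ∈ E i, x ∈ A → x ∈ fperp (E i) := by
    intro x hx hxA
    have h1 : x ∈ E (2*n - i) := by
      refine chain_mono E hchain A i (2*n - i) (by omega) (by omega) ?_ hx hxA
      intro k h1 h2 hk
      rw [hmemA] at hk
      omega
    rwa [hdual i hi2] at h1
  -- Step B: elements of `fperp (E i)` outside `A` land in `E i`
  have stepB : ∀ x : Fin (2*n), x ∈ fperp (E i) → x ∉ A → x ∈ E i := by
    intro x hx hxA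
    have hx1 : x ∈ E (2*n - i) := by rw [hdual i hi2]; exact hx
    have hx2 : x ∈ E (2*n) := by
      refine chain_mono E hchain Aᶜ (2*n - i) (2*n) (by omega) le_rfl ?_ hx1
        (Finset.mem_compl.2 hxA)
      intro k h1 h2 hk
      rw [Finset.mem_compl, hmemA] at hk
      exact hk (Or.inr h1)
    rw [hper] at hx2
    refine chain_mono E hchain Aᶜ 0 i (by omega) hi2 ?_ hx2 (Finset.mem_compl.2 hxA)
    intro k h1 h2 hk
    rw [Finset.mem_compl, hmemA] at hk
    exact hk (Or.inl h2)
  -- cardinality of A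
  have hcardA : A.card = 2*i := by
    have himg : Aᶜ.image Fin.val = Finset.Ico i (2*n - i) := by
      ext m
      simp only [Finset.mem_image, Finset.mem_compl, Finset.mem_Ico]
      constructor
      · rintro ⟨j, hj, rfl⟩
        rw [hmemA] at hj
        omega
      · rintro ⟨h1, h2⟩
        refine ⟨⟨m, by omega⟩, ?_, rfl⟩
        rw [hmemA]
        simp only [Fin.val_mk]
        omega
    have h1 : Aᶜ.card = 2*n - 2*i := by
      have := Finset.card_image_of_injective Aᶜ (Fin.val_injective)
      rw [himg, Nat.card_Ico] at this
      omega
    have h2 : A.card + Aᶜ.card = 2*n := by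
      rw [Finset.card_add_card_compl, Fintype.card_fin]
    omega
  -- the part of E i outside A has n - i elements
  set S : Finset (Fin (2*n)) := E i ∩ Aᶜ with hS
  have hcardS : S.card = n - i := by
    have h1 : (E i ∩ A).card + (E i \ A).card = (E i).card :=
      Finset.card_inter_add_card_sdiff (E i) A
    rw [hcard i hi2, hEA] at h1
    have : E i \ A = S := by rw [hS]; ext z; simp [Finset.mem_sdiff]
    rw [this] at h1
    omega
  -- Aᶜ is closed under rev
  have hBrev : ∀ j : Fin (2*n), j ∉ A → j.rev ∉ A := by
    intro j hj
    rw [hmemA] at hj ⊢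
    have := hrev j
    have := j.isLt
    omega
  -- Aᶜ ⊆ S ∪ fstar S
  have hcover : Aᶜ ⊆ S ∪ fstar S := by
    intro y hy
    rw [Finset.mem_compl] at hy
    rw [Finset.mem_union]
    by_cases hyr : y.rev ∈ E i
    · right
      rw [mem_fstar, hS, Finset.mem_inter, Finset.mem_compl]
      exact ⟨hyr, hBrev y hy⟩
    · left
      rw [hS, Finset.mem_inter, Finset.mem_compl]
      exact ⟨stepB y (mem_fperp.2 hyr) hy, hy⟩
  -- hence S and fstar S are disjoint
  have hdisj : S ∩ fstar S = ∅ := by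
    have h1 : (S ∪ fstar S).card + (S ∩ fstar S).card = S.card + (fstar S).card :=
      Finset.card_union_add_card_inter S (fstar S)
    have h2 : 2*n - 2*i ≤ (S ∪ fstar S).card := by
      have := Finset.card_le_card hcover
      have h3 : Aᶜ.card = 2*n - 2*i := by
        have h4 : A.card + Aᶜ.card = 2*n := by
          rw [Finset.card_add_card_compl, Fintype.card_fin]
        omega
      omega
    rw [card_fstar, hcardS] at h1
    have : (S ∩ fstar S).card = 0 := by omega
    exact Finset.card_eq_zero.1 this
  -- conclude E i ⊆ fperp (E i)
  have hsub : E i ⊆ fperp (E i) := by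
    intro x hx
    rw [mem_fperp]
    by_cases hxA : x ∈ A
    · exact mem_fperp.1 (stepA x hx hxA)
    · intro hxr
      have hxS : x ∈ S := by
        rw [hS, Finset.mem_inter, Finset.mem_compl]; exact ⟨hx, hxA⟩
      have hxS' : x ∈ fstar S := by
        rw [mem_fstar, hS, Finset.mem_inter, Finset.mem_compl]
        exact ⟨hxr, hBrev x hxA⟩
      have : x ∈ S ∩ fstar S := Finset.mem_inter.2 ⟨hxS, hxS'⟩
      rw [hdisj] at this
      exact absurd this (Finset.notMem_empty x)
  refine Finset.eq_of_subset_of_card_le hsub ?_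
  rw [card_fperp, hcard i hi2]
  omega


end OrthLM
end

section
/- Let w ∈ W̃ be GL-permissible. Then for all m ∈ {1,…,2n} and all k ∈ ℤ/2nℤ: k ∈ K_m if and only if 2n−k ∉ K_{m*}; equivalently, K_{m*} = −(K_m)^c, where the complement is taken in ℤ/2nℤ. Consequently, if K_m is an interval [m̃, m), then K_{m*} is the interval [m̃*, m*); in particular m is proper if and only if m* is proper, and then the lower endpoint of K_{m*} is (m̃)*. -/
open Finset

namespace OrthLM

/-- Membership in the cocharacter lattice `X` of the standard maximal torus of `GO_{2n}`:
integer vectors with `r_i + r_{i*}` independent of `i`. -/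
def inX (n : ℕ) (v : Fin (2*n) → ℤ) : Prop :=
  ∀ i j : Fin (2*n), v i + v i.rev = v j + v j.rev

/-- Membership in `S^h_{2n}`: permutations commuting with the involution `i ↦ i* = 2n+1-i`. -/
def inSh (n : ℕ) (σ : Equiv.Perm (Fin (2*n))) : Prop :=
  ∀ i, σ i.rev = (σ i).rev

/-- Membership in `W°`: elements of `S^h_{2n}` that are even as permutations. -/
def inW0 (n : ℕ) (σ : Equiv.Perm (Fin (2*n))) : Prop :=
  inSh n σ ∧ Equiv.Perm.sign σ = 1

/-- Elements of the ambient group of the Iwahori-Weyl group `W̃ = X ⋊ S^h_{2n}`,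
represented as pairs (translation part, finite part). -/
abbrev Wt (n : ℕ) := (Fin (2*n) → ℤ) × Equiv.Perm (Fin (2*n))

/-- Membership in the Iwahori-Weyl group `W̃ = X ⋊ S^h_{2n}`. -/
def inWt (n : ℕ) (w : Wt n) : Prop := inX n w.1 ∧ inSh n w.2

def wone (n : ℕ) : Wt n := (0, 1)

/-- Multiplication in `W̃` (compatible with the affine action `(v,σ)·x = v + σx`). -/
def wmul (n : ℕ) (w w' : Wt n) : Wt n :=
  (fun i => w.1 i + w'.1 (w.2⁻¹ i), w.2 * w'.2)

/-- Inversion in `W̃`. -/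
def winv (n : ℕ) (w : Wt n) : Wt n := (fun i => -(w.1 (w.2 i)), w.2⁻¹)

/-- The translation element `t_μ`. -/
def wtrans (n : ℕ) (μ : Fin (2*n) → ℤ) : Wt n := (μ, 1)

/-- A finite Weyl group element regarded in `W̃`. -/
def wperm (n : ℕ) (σ : Equiv.Perm (Fin (2*n))) : Wt n := (0, σ)

/-- The affine action of `W̃` on `ℤ^{2n}`: `(v,σ)·x = v + σx` with `(σx)(i) = x(σ⁻¹ i)`. -/
def wact (n : ℕ) (w : Wt n) (x : Fin (2*n) → ℤ) : Fin (2*n) → ℤ :=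
  fun i => w.1 i + x (w.2⁻¹ i)

/-- The affine action of `W̃` on `ℝ^{2n}`. -/
def wactR (n : ℕ) (w : Wt n) (x : Fin (2*n) → ℝ) : Fin (2*n) → ℝ :=
  fun i => (w.1 i : ℝ) + x (w.2⁻¹ i)

/-- The action of a permutation on vectors: `(σμ)(i) = μ(σ⁻¹ i)`. -/
def permAct (n : ℕ) (σ : Equiv.Perm (Fin (2*n))) (μ : Fin (2*n) → ℤ) : Fin (2*n) → ℤ :=
  fun i => μ (σ⁻¹ i)

/-- The cocharacter `μ₁ = (1^{(n)}, 0^{(n)})`. -/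
def mu1 (n : ℕ) : Fin (2*n) → ℤ := fun j => if (j:ℕ) < n then 1 else 0

/-- The cocharacter `μ₂ = (1^{(n-1)}, 0, 1, 0^{(n-1)})`. -/
def mu2 (n : ℕ) : Fin (2*n) → ℤ := fun j => if (j:ℕ) < n - 1 ∨ (j:ℕ) = n then 1 else 0

/-- The vertices `ω_k = ((-1)^{(k)}, 0^{(2n-k)})` of the standard extended alcove. -/
def om (n : ℕ) (k : ℕ) : Fin (2*n) → ℤ := fun j => if (j:ℕ) < k then -1 else 0

/-- The extended alcove `v_k = w·ω_k` of `w`. -/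
def valc (n : ℕ) (w : Wt n) (k : ℕ) : Fin (2*n) → ℤ := wact n w (om n k)

/-- The vector `μ_k^w = v_k - ω_k`. -/
def muk (n : ℕ) (w : Wt n) (k : ℕ) : Fin (2*n) → ℤ :=
  fun j => valc n w k j - om n k j

/-- The set `E_k^w = {j : μ_k^w(j) = 0}`. -/
def Ew (n : ℕ) (w : Wt n) (k : ℕ) : Finset (Fin (2*n)) :=
  univ.filter fun j => muk n w k j = 0

/-- `GL`-permissibility: `Σ v_0 = n` and `ω_k ≤ v_k ≤ ω_k + (1,…,1)` for `0 ≤ k ≤ 2n-1`. -/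
def GLperm (n : ℕ) (w : Wt n) : Prop :=
  (∑ j, valc n w 0 j) = (n : ℤ) ∧
  ∀ k < 2*n, ∀ j, om n k j ≤ valc n w k j ∧ valc n w k j ≤ om n k j + 1

/-- A vector `μ ∈ {0,1}^{2n}` is totally isotropic if `μ(j) + μ(j*) = 1` for all `j`. -/
def TotIso (n : ℕ) (μ : Fin (2*n) → ℤ) : Prop := ∀ j, μ j + μ j.rev = 1

/-- `μ`-spin-permissibility: `GL`-permissible and every totally isotropic `μ_k^w`
(for `0 ≤ k ≤ n`) lies in the `W°`-orbit of `μ`. -/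
def SpinPerm (n : ℕ) (μ : Fin (2*n) → ℤ) (w : Wt n) : Prop :=
  GLperm n w ∧ ∀ k ≤ n, TotIso n (muk n w k) →
    ∃ σ, inW0 n σ ∧ muk n w k = permAct n σ μ

/-- Membership in the coroot lattice `Q^∨`. -/
def inQv (n : ℕ) (v : Fin (2*n) → ℤ) : Prop :=
  inX n v ∧ (∀ i, v i + v i.rev = 0) ∧
  Even (∑ i ∈ univ.filter (fun i : Fin (2*n) => (i:ℕ) < n), v i)

/-- Membership in the affine Weyl group `W_a = Q^∨ ⋊ W°`. -/
def inWa (n : ℕ) (x : Wt n) : Prop := inQv n x.1 ∧ inW0 n x.2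

/-- The affine reflection `s_{i,j;d}` (for `j ∉ {i, i*}`), sending `x` to the vector with
`x_j + d` in slot `i`, `x_i - d` in slot `j`, `x_{i*} + d` in slot `j*`, `x_{j*} - d` in
slot `i*`. -/
def wrefl (n : ℕ) (i j : Fin (2*n)) (d : ℤ) : Wt n :=
  (fun l => if l = i then d else if l = j then -d else if l = j.rev then d
            else if l = i.rev then -d else 0,
   Equiv.swap i j * Equiv.swap i.rev j.rev)

/-- Successor modulo `2n` on representatives `{0,…,2n-1}` of `ℤ/2nℤ`. -/
def csucc (n : ℕ) (k : Fin (2*n)) : Fin (2*n) :=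
  ⟨((k:ℕ) + 1) % (2*n), Nat.mod_lt _ k.pos⟩

/-- Predecessor modulo `2n`. -/
def cpred (n : ℕ) (k : Fin (2*n)) : Fin (2*n) :=
  ⟨((k:ℕ) + (2*n - 1)) % (2*n), Nat.mod_lt _ k.pos⟩

/-- Negation modulo `2n`. -/
def cneg (n : ℕ) (k : Fin (2*n)) : Fin (2*n) :=
  ⟨(2*n - (k:ℕ)) % (2*n), Nat.mod_lt _ k.pos⟩

/-- The star involution on classes mod `2n`: the class of `m` goes to the class of
`m* = 2n+1-m`, i.e. `c ↦ 1 - c`. -/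
def cstar (n : ℕ) (k : Fin (2*n)) : Fin (2*n) := csucc n (cneg n k)

/-- The representative in `{1,…,2n}` of a class mod `2n`. -/
def pv (n : ℕ) (k : Fin (2*n)) : ℕ := if (k:ℕ) = 0 then 2*n else (k:ℕ)

/-- The cyclic interval `[a, b)` in `ℤ/2nℤ`. -/
def cyc (n : ℕ) (a b : Fin (2*n)) : Finset (Fin (2*n)) :=
  univ.filter fun k => ((k:ℕ) + 2*n - (a:ℕ)) % (2*n) < ((b:ℕ) + 2*n - (a:ℕ)) % (2*n)

/-- The set `K_m = {k ∈ ℤ/2nℤ : μ_k^w(m) = 0}` (indices `m` are 0-indexed: the slot `m`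
corresponds to the paper's `m+1 ∈ {1,…,2n}`; classes are represented by `{0,…,2n-1}`). -/
def Kset (n : ℕ) (w : Wt n) (m : Fin (2*n)) : Finset (Fin (2*n)) :=
  univ.filter fun k => muk n w (k:ℕ) m = 0

/-- The slot `m` is proper: `K_{m+1}` (paper indexing) is a cyclic interval `[m̃, m+1)`
with lower endpoint `m̃` different from the class of `m+1`. -/
def isProper (n : ℕ) (w : Wt n) (m : Fin (2*n)) : Prop :=
  ∃ mt, mt ≠ csucc n m ∧ Kset n w m = cyc n mt (csucc n m)

/-- The constraint cutting out `X ⊗ ℝ` inside `ℝ^{2n}`. -/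
def inXR (n : ℕ) (x : Fin (2*n) → ℝ) : Prop :=
  ∀ i j : Fin (2*n), x i + x i.rev = x j + x j.rev

/-- The closure (in `X ⊗ ℝ`, lifted to `ℝ^{2n}`) of the preimage `Ã` of the base alcove:
the points of `X ⊗ ℝ` on which every positive root `x_i - x_j`, `x_i + x_j - c(x)`
(`1 ≤ i < j ≤ n`) takes values in `[-1, 0]`. -/
def ClA (n : ℕ) : Set (Fin (2*n) → ℝ) :=
  {x | inXR n x ∧
       ∀ i j : Fin (2*n), i < j → (j:ℕ) < n →
         (-1 ≤ x i - x j ∧ x i - x j ≤ 0 ∧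
          -1 ≤ x i + x j - (x i + x i.rev) ∧ x i + x j - (x i + x i.rev) ≤ 0)}

/-- The stabilizer `Ω` in `W̃` of the base alcove. -/
def inOmega (n : ℕ) (w : Wt n) : Prop :=
  inWt n w ∧ (wactR n w) '' ClA n = ClA n

/-- The Coxeter generators of `W_a`: the reflections in the walls of the base alcove,
namely `s_{i,i+1;0}` for `1 ≤ i ≤ n-1`, `s_{n-1,n+1;0}`, and `s_{1,2n-1;-1}`
(paper 1-indexed; here 0-indexed). -/
def sgens (n : ℕ) (hn : 2 ≤ n) : Set (Wt n) :=
  {w | (∃ i : Fin (2*n), (i:ℕ) + 1 < n ∧ w = wrefl n i (csucc n i) 0) ∨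
       w = wrefl n ⟨n-2, by omega⟩ ⟨n, by omega⟩ 0 ∨
       w = wrefl n ⟨0, by omega⟩ ⟨2*n-2, by omega⟩ (-1)}

def wprod (n : ℕ) (L : List (Wt n)) : Wt n := L.foldr (wmul n) (wone n)

/-- A word in the Coxeter generators of `W_a`. -/
def isWord (n : ℕ) (hn : 2 ≤ n) (L : List (Wt n)) : Prop := ∀ s ∈ L, s ∈ sgens n hn

/-- The length function on `W̃`: `ℓ(xω) = ℓ(x)` for `x ∈ W_a`, `ω ∈ Ω`, where `ℓ(x)` is
the minimal length of a word in the Coxeter generators expressing `x`. -/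
noncomputable def lenW (n : ℕ) (hn : 2 ≤ n) (w : Wt n) : ℕ :=
  sInf {m | ∃ L ω, isWord n hn L ∧ L.length = m ∧ inOmega n ω ∧ w = wmul n (wprod n L) ω}

/-- The Bruhat order on `W̃`: `xω ≤ x'ω'` iff `ω = ω'` and `x ≤ x'` in `W_a`, the latter
expressed by the subword property for a reduced word of `x'`. -/
def wle (n : ℕ) (hn : 2 ≤ n) (w w' : Wt n) : Prop :=
  ∃ L ω, isWord n hn L ∧ inOmega n ω ∧ w' = wmul n (wprod n L) ω ∧
    L.length = lenW n hn w' ∧ ∃ L', L'.Sublist L ∧ w = wmul n (wprod n L') ω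

/-- Strict Bruhat order on `W̃`. -/
def wlt (n : ℕ) (hn : 2 ≤ n) (w w' : Wt n) : Prop := wle n hn w w' ∧ w ≠ w'

/-- The `μ`-admissible set `Adm°(μ)` for `G°`: `w ≤ σ t_μ σ⁻¹` for some `σ ∈ W°`. -/
def AdmO (n : ℕ) (hn : 2 ≤ n) (μ : Fin (2*n) → ℤ) (w : Wt n) : Prop :=
  ∃ σ, inW0 n σ ∧
    wle n hn w (wmul n (wperm n σ) (wmul n (wtrans n μ) (wperm n σ⁻¹)))

/-- The `μ`-admissible set `Adm(μ)` for `G`: `w ≤ σ t_μ σ⁻¹` for some `σ ∈ S^h_{2n}`. -/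
def AdmFull (n : ℕ) (hn : 2 ≤ n) (μ : Fin (2*n) → ℤ) (w : Wt n) : Prop :=
  ∃ σ, inSh n σ ∧
    wle n hn w (wmul n (wperm n σ) (wmul n (wtrans n μ) (wperm n σ⁻¹)))

/-- The element `τ = (n, n+1) ∈ S^h_{2n}` (paper 1-indexed). -/
def tau (n : ℕ) (hn : 2 ≤ n) : Equiv.Perm (Fin (2*n)) :=
  Equiv.swap ⟨n-1, by omega⟩ ⟨n, by omega⟩

/-! GL-permissibility makes every `μ_k^w` a `0/1`-vector, and together with `Σ v_0 = n` and the
defining condition of `X` it forces the translation part `v` of `w` to satisfy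
`v(m) + v(m*) = 1`. As `ω_k(j) + ω_{2n-k}(j*) = -1` and the finite part of `w` commutes with `*`,
this gives `μ_k^w(m) + μ_{-k}^w(m*) = 1`, i.e. `k ∈ K_m ↔ -k ∉ K_{m*}`. The statements about
intervals are then arithmetic in `ℤ/2nℤ`: negation maps `[a, b)ᶜ = [b, a)` onto `[1-a, 1-b)`. -/

end OrthLM

namespace Fin

variable {N : ℕ} [NeZero N]

theorem rev_eq_neg_one_sub (i : Fin N) : i.rev = -1 - i := by
  obtain ⟨M, rfl⟩ := Nat.exists_eq_succ_of_ne_zero (NeZero.ne N)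
  rw [← last_sub, ← neg_last, neg_neg]

theorem rev_lt_neg_iff {t d : Fin N} (hd : d ≠ 0) : t.rev < -d ↔ d ≤ t := by
  have hd' : (d : ℕ) ≠ 0 := val_ne_zero_iff.mpr hd
  rw [lt_def, le_def, val_rev, Fin.val_neg', Nat.mod_eq_of_lt (by omega)]
  omega

end Fin

namespace OrthLM

variable {n : ℕ}

theorem cneg_eq_neg (k : Fin (2*n)) : cneg n k = -k := by
  ext
  simp [cneg, Fin.neg_def]

theorem mem_cyc_iff {a b k : Fin (2*n)} : k ∈ cyc n a b ↔ k - a < b - a := by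
  have ha := a.isLt
  simp only [cyc, mem_filter, mem_univ, true_and, Fin.lt_def, Fin.sub_def]
  rw [Nat.add_sub_assoc ha.le, Nat.add_sub_assoc ha.le, Nat.add_comm (k : ℕ), Nat.add_comm (b : ℕ)]

section Cyclic

variable [NeZero n]

theorem csucc_eq_add_one (k : Fin (2*n)) : csucc n k = k + 1 := by
  ext
  simp [csucc, Fin.val_add]

theorem cstar_eq_one_sub (k : Fin (2*n)) : cstar n k = 1 - k := by
  rw [cstar, csucc_eq_add_one, cneg_eq_neg, neg_add_eq_sub]

theorem csucc_rev (m : Fin (2*n)) : csucc n m.rev = cstar n (csucc n m) := by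
  rw [cstar_eq_one_sub, csucc_eq_add_one, csucc_eq_add_one, Fin.rev_eq_neg_one_sub]
  abel

theorem neg_notMem_cyc_iff {a b x : Fin (2*n)} (hab : a ≠ b) :
    -x ∉ cyc n a b ↔ x ∈ cyc n (1 - a) (1 - b) := by
  have hx : x - (1 - a) = (-x - a).rev := by rw [Fin.rev_eq_neg_one_sub]; abel
  have hb : 1 - b - (1 - a) = -(b - a) := by abel
  rw [mem_cyc_iff, mem_cyc_iff, hx, hb, Fin.rev_lt_neg_iff (sub_ne_zero.mpr hab.symm), not_lt]

end Cyclic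

theorem inSh.inv_apply_rev {σ : Equiv.Perm (Fin (2*n))} (hσ : inSh n σ) (i : Fin (2*n)) :
    σ⁻¹ i.rev = (σ⁻¹ i).rev := by
  rw [Equiv.Perm.inv_eq_iff_eq, hσ]
  exact congrArg Fin.rev (σ.apply_symm_apply i).symm

theorem valc_zero (w : Wt n) : valc n w 0 = w.1 := by
  funext j
  simp [valc, wact, om]

theorem add_apply_rev_eq_one {v : Fin (2*n) → ℤ} (hv : inX n v) (hsum : ∑ j, v j = n)
    (m : Fin (2*n)) : v m + v m.rev = 1 := by
  have hrev : ∑ j : Fin (2*n), v j.rev = n := by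
    rw [← hsum]
    exact Fintype.sum_equiv Fin.revPerm _ _ fun _ => rfl
  have h : ∑ j : Fin (2*n), (v j + v j.rev) = 2 * n * (v m + v m.rev) := by
    simp [hv _ m, Finset.card_univ]
  rw [Finset.sum_add_distrib, hsum, hrev] at h
  have hn : (2 * n : ℤ) ≠ 0 := by have := m.pos; omega
  exact mul_left_cancel₀ hn (by linarith)

theorem om_add_om_rev {k : ℕ} (hk : k ≤ 2*n) (j : Fin (2*n)) :
    om n k j + om n (2*n - k) j.rev = -1 := by
  have hj := j.isLt
  simp only [om, Fin.val_rev]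
  split_ifs <;> omega

theorem muk_two_mul (w : Wt n) : muk n w (2*n) = muk n w 0 := by
  funext j
  simp [muk, valc, wact, om]

theorem muk_cneg (w : Wt n) (k : Fin (2*n)) : muk n w (cneg n k) = muk n w (2*n - k) := by
  rcases Nat.eq_zero_or_pos (k : ℕ) with hk | hk
  · simp [cneg, hk, muk_two_mul]
  · rw [cneg, Fin.val_mk, Nat.mod_eq_of_lt (by omega)]

theorem muk_add_muk_rev {w : Wt n} (hσ : inSh n w.2) (hv : ∀ m, w.1 m + w.1 m.rev = 1)
    {k : ℕ} (hk : k ≤ 2*n) (m : Fin (2*n)) : muk n w k m + muk n w (2*n - k) m.rev = 1 := by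
  simp only [muk, valc, wact, hσ.inv_apply_rev]
  linarith [hv m, om_add_om_rev hk m, om_add_om_rev hk (w.2⁻¹ m)]

theorem GLperm.muk_eq_zero_or_one {w : Wt n} (hGL : GLperm n w) {k : ℕ} (hk : k < 2*n)
    (j : Fin (2*n)) : muk n w k j = 0 ∨ muk n w k j = 1 := by
  have := hGL.2 k hk j
  simp only [muk]
  omega

section Duality

variable {w : Wt n} (hw : inWt n w) (hGL : GLperm n w)
include hw hGL

theorem mem_Kset_iff_cneg_notMem (m k : Fin (2*n)) :
    k ∈ Kset n w m ↔ cneg n k ∉ Kset n w m.rev := by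
  have hv := add_apply_rev_eq_one hw.1 (by rw [← valc_zero]; exact hGL.1)
  have hsum := muk_add_muk_rev hw.2 hv k.isLt.le m
  have h₁ := hGL.muk_eq_zero_or_one k.isLt m
  simp only [Kset, mem_filter, mem_univ, true_and, muk_cneg]
  omega

theorem mem_Kset_rev_iff (m x : Fin (2*n)) : x ∈ Kset n w m.rev ↔ -x ∉ Kset n w m := by
  rw [mem_Kset_iff_cneg_notMem hw hGL m (-x), cneg_eq_neg, neg_neg, not_not]

theorem Kset_rev_eq_image_compl (m : Fin (2*n)) :
    Kset n w m.rev = ((Kset n w m)ᶜ).image (cneg n) := by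
  ext x
  rw [mem_Kset_rev_iff hw hGL, funext cneg_eq_neg, image_neg_eq_neg, mem_neg', mem_compl]

variable [NeZero n]

theorem Kset_rev_eq_cyc {m mt : Fin (2*n)} (hne : mt ≠ csucc n m)
    (hK : Kset n w m = cyc n mt (csucc n m)) :
    Kset n w m.rev = cyc n (cstar n mt) (csucc n m.rev) := by
  ext x
  rw [mem_Kset_rev_iff hw hGL, hK, neg_notMem_cyc_iff hne, csucc_rev, cstar_eq_one_sub,
    cstar_eq_one_sub]

theorem isProper.rev {m : Fin (2*n)} (h : isProper n w m) : isProper n w m.rev := by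
  obtain ⟨mt, hne, hK⟩ := h
  refine ⟨cstar n mt, ?_, Kset_rev_eq_cyc hw hGL hne hK⟩
  rw [csucc_rev, cstar_eq_one_sub, cstar_eq_one_sub]
  exact fun h => hne (sub_right_injective h)

end Duality

theorem K_duality_general (n : ℕ) (w : Wt n)
    (hw : inWt n w) (hGL : GLperm n w) :
    (∀ m k : Fin (2*n), k ∈ Kset n w m ↔ cneg n k ∉ Kset n w m.rev) ∧
    (∀ m : Fin (2*n), Kset n w m.rev = ((Kset n w m)ᶜ).image (cneg n)) ∧
    (∀ m mt : Fin (2*n), mt ≠ csucc n m → Kset n w m = cyc n mt (csucc n m) →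
      Kset n w m.rev = cyc n (cstar n mt) (csucc n m.rev)) ∧
    (∀ m : Fin (2*n), isProper n w m ↔ isProper n w m.rev) := by
  refine ⟨mem_Kset_iff_cneg_notMem hw hGL, Kset_rev_eq_image_compl hw hGL, ?_⟩
  rcases n.eq_zero_or_pos with rfl | hn
  · exact ⟨fun m => m.elim0, fun m => m.elim0⟩
  have : NeZero n := ⟨hn.ne'⟩
  refine ⟨fun _ _ => Kset_rev_eq_cyc hw hGL, fun m => ⟨isProper.rev hw hGL, fun h => ?_⟩⟩
  simpa only [Fin.rev_rev] using h.rev hw hGL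

/-- (Duality for the sets `K_m`.)  Let `w ∈ W̃` be GL-permissible.
Then for all slots `m` and classes `k`: `k ∈ K_m ↔ -k ∉ K_{m*}`; equivalently
`K_{m*} = -(K_m)ᶜ`.  Consequently if `K_m` is an interval `[m̃, m)` then `K_{m*}` is the
interval `[m̃*, m*)`, and `m` is proper iff `m*` is proper.  (Slot `m` has paper index
`(m:ℕ)+1` with class `csucc m`; the star on classes is `c ↦ 1 - c = cstar c`.) -/
theorem K_duality (n : ℕ) (hn : 2 ≤ n) (w : Wt n)
    (hw : inWt n w) (hGL : GLperm n w) :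
    (∀ m k : Fin (2*n), k ∈ Kset n w m ↔ cneg n k ∉ Kset n w m.rev) ∧
    (∀ m : Fin (2*n), Kset n w m.rev = ((Kset n w m)ᶜ).image (cneg n)) ∧
    (∀ m mt : Fin (2*n), mt ≠ csucc n m → Kset n w m = cyc n mt (csucc n m) →
      Kset n w m.rev = cyc n (cstar n mt) (csucc n m.rev)) ∧
    (∀ m : Fin (2*n), isProper n w m ↔ isProper n w m.rev) :=
  K_duality_general n w hw hGL

end OrthLM
end
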